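/- For x > 0, the complementary error function satisfies 2 e^{−x²}/(√π (x + √(x²+2))) ≤ erfc(x) ≤ 2 e^{−x²}/(√π (x + √(x² + 4/π))). -/

import Mathlib

/-!
Let `T x = ∫_x^∞ e^{-s²} ds` (`gaussianTail`), so that `erfc = (2/√π) T`, and
`K_c x = e^{-x²} / (x + √(x² + c))` (`komatsuBound`). Both tend to `0` at `∞`, and with
`u = √(x² + c)` one computes `(T - K_c)' x = K_c x / u * (x u - (x² + c - 1))`, whose sign for
`x ≥ 0` is that of `(2 - c) x² - (c - 1)²`. For `c = 2` the derivative is never positive, so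
`T - K_2` decreases to `0` and is nonnegative. For `c = 4/π ∈ (1, 2)`, `T - K_c` first decreases
and then increases; it starts at `T 0 - K_c 0 = √π/2 - √π/2 = 0` and tends to `0`, so it is
nonpositive on `[0, ∞)`.
-/

noncomputable def erfc (x : ℝ) : ℝ :=
  (2 / Real.sqrt Real.pi) * ∫ s in Set.Ioi x, Real.exp (-(s^2))

open Real Set Filter Topology MeasureTheory

noncomputable def gaussianTail (x : ℝ) : ℝ := ∫ s in Ioi x, exp (-(s ^ 2))

lemma erfc_eq_mul_gaussianTail (x : ℝ) : erfc x = 2 / √π * gaussianTail x := rfl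

lemma integrable_exp_neg_sq : Integrable fun s : ℝ ↦ exp (-(s ^ 2)) := by
  simpa using integrable_exp_neg_mul_sq one_pos

lemma continuous_exp_neg_sq : Continuous fun s : ℝ ↦ exp (-(s ^ 2)) := by fun_prop

lemma gaussianTail_zero : gaussianTail 0 = √π / 2 := by
  simpa [gaussianTail] using integral_gaussian_Ioi 1

lemma gaussianTail_eq_sub (x : ℝ) :
    gaussianTail x = gaussianTail 0 - ∫ s in (0 : ℝ)..x, exp (-(s ^ 2)) := by
  rw [gaussianTail, gaussianTail,
    ← intervalIntegral.integral_interval_add_Ioi (a := 0) (b := x)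
      integrable_exp_neg_sq.integrableOn integrable_exp_neg_sq.integrableOn]
  ring

lemma hasDerivAt_gaussianTail (x : ℝ) : HasDerivAt gaussianTail (-exp (-(x ^ 2))) x := by
  rw [funext gaussianTail_eq_sub]
  exact (intervalIntegral.integral_hasDerivAt_right (continuous_exp_neg_sq.intervalIntegrable _ _)
    (continuous_exp_neg_sq.stronglyMeasurableAtFilter _ _)
    continuous_exp_neg_sq.continuousAt).const_sub _

lemma tendsto_gaussianTail_atTop : Tendsto gaussianTail atTop (𝓝 0) := by
  have h : Tendsto (fun x ↦ ∫ s in (0 : ℝ)..x, exp (-(s ^ 2))) atTop (𝓝 (gaussianTail 0)) :=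
    intervalIntegral_tendsto_integral_Ioi 0 integrable_exp_neg_sq.integrableOn tendsto_id
  simpa only [← gaussianTail_eq_sub, sub_self] using (tendsto_const_nhds (x := gaussianTail 0)).sub h

lemma tendsto_exp_neg_sq_atTop : Tendsto (fun x : ℝ ↦ exp (-(x ^ 2))) atTop (𝓝 0) :=
  tendsto_exp_atBot.comp (tendsto_neg_atTop_atBot.comp (tendsto_pow_atTop two_ne_zero))

noncomputable def komatsuBound (c x : ℝ) : ℝ := exp (-(x ^ 2)) / (x + √(x ^ 2 + c))

lemma add_sqrt_sq_add_pos {c : ℝ} (hc : 0 < c) (x : ℝ) : 0 < x + √(x ^ 2 + c) := by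
  have : |x| < √(x ^ 2 + c) := by
    rw [← sqrt_sq_eq_abs]; exact sqrt_lt_sqrt (sq_nonneg x) (by linarith)
  linarith [neg_abs_le x]

lemma komatsuBound_pos {c : ℝ} (hc : 0 < c) (x : ℝ) : 0 < komatsuBound c x :=
  div_pos (exp_pos _) (add_sqrt_sq_add_pos hc x)

lemma komatsuBound_four_div_pi_zero : komatsuBound (4 / π) 0 = √π / 2 := by
  have h4 : √(4 : ℝ) = 2 := by
    rw [show (4 : ℝ) = 2 ^ 2 by norm_num, sqrt_sq zero_le_two]
  simp only [komatsuBound, sq, mul_zero, neg_zero, exp_zero, zero_add, sqrt_div' _ pi_pos.le, h4]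
  field_simp

lemma tendsto_komatsuBound_atTop (c : ℝ) : Tendsto (komatsuBound c) atTop (𝓝 0) := by
  have h : Tendsto (fun x ↦ x + √(x ^ 2 + c)) atTop atTop :=
    tendsto_atTop_mono (fun x ↦ le_add_of_nonneg_right (sqrt_nonneg _)) tendsto_id
  have h' := tendsto_exp_neg_sq_atTop.mul (tendsto_inv_atTop_zero.comp h)
  rw [mul_zero] at h'
  exact h'.congr fun x ↦ (div_eq_mul_inv _ _).symm

lemma hasDerivAt_komatsuBound {c : ℝ} (hc : 0 < c) (x : ℝ) :
    HasDerivAt (komatsuBound c) (-komatsuBound c x * (2 * x + (√(x ^ 2 + c))⁻¹)) x := by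
  have hexp : HasDerivAt (fun y ↦ exp (-(y ^ 2))) (exp (-(x ^ 2)) * -(2 * x)) x := by
    simpa using ((hasDerivAt_pow 2 x).neg).exp
  have hsqrt : HasDerivAt (fun y ↦ √(y ^ 2 + c)) (2 * x / (2 * √(x ^ 2 + c))) x :=
    ((hasDerivAt_pow 2 x).add_const c).sqrt (by positivity) |>.congr_deriv (by ring)
  have hw := add_sqrt_sq_add_pos hc x
  refine (hexp.div ((hasDerivAt_id' x).add hsqrt) hw.ne').congr_deriv ?_
  simp only [komatsuBound, Pi.add_apply]
  field_simp
  ring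

lemma hasDerivAt_gaussianTail_sub_komatsuBound {c : ℝ} (hc : 0 < c) (x : ℝ) :
    HasDerivAt (fun y ↦ gaussianTail y - komatsuBound c y)
      (komatsuBound c x / √(x ^ 2 + c) * (x * √(x ^ 2 + c) - (x ^ 2 + c - 1))) x := by
  have hu2 := sq_sqrt (show 0 ≤ x ^ 2 + c by positivity)
  have hw := add_sqrt_sq_add_pos hc x
  refine ((hasDerivAt_gaussianTail x).sub (hasDerivAt_komatsuBound hc x)).congr_deriv ?_
  rw [komatsuBound]
  field_simp
  linear_combination -hu2

lemma tendsto_gaussianTail_sub_komatsuBound_atTop (c : ℝ) :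
    Tendsto (fun y ↦ gaussianTail y - komatsuBound c y) atTop (𝓝 0) := by
  simpa using tendsto_gaussianTail_atTop.sub (tendsto_komatsuBound_atTop c)

lemma mul_sqrt_sq_add_le {c x : ℝ} (hc : 1 ≤ c) (h : (2 - c) * x ^ 2 ≤ (c - 1) ^ 2) :
    x * √(x ^ 2 + c) ≤ x ^ 2 + c - 1 := by
  have hu := sq_sqrt (show 0 ≤ x ^ 2 + c by positivity)
  exact le_of_sq_le_sq (by nlinarith) (by nlinarith)

lemma le_mul_sqrt_sq_add {c x : ℝ} (hc : 0 ≤ c) (hx : 0 ≤ x)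
    (h : (c - 1) ^ 2 ≤ (2 - c) * x ^ 2) : x ^ 2 + c - 1 ≤ x * √(x ^ 2 + c) := by
  have hu := sq_sqrt (show 0 ≤ x ^ 2 + c by positivity)
  exact le_of_sq_le_sq (by nlinarith) (by positivity)

lemma komatsuBound_le_gaussianTail {c : ℝ} (hc : 2 ≤ c) (x : ℝ) :
    komatsuBound c x ≤ gaussianTail x := by
  have hc0 : 0 < c := by linarith
  have hanti : Antitone fun y ↦ gaussianTail y - komatsuBound c y :=
    antitone_of_hasDerivAt_nonpos (hasDerivAt_gaussianTail_sub_komatsuBound hc0) fun y ↦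
      mul_nonpos_of_nonneg_of_nonpos (div_nonneg (komatsuBound_pos hc0 y).le (sqrt_nonneg _))
        (sub_nonpos.2 (mul_sqrt_sq_add_le (by linarith) (by nlinarith)))
  linarith [hanti.le_of_tendsto (tendsto_gaussianTail_sub_komatsuBound_atTop c) x]

lemma gaussianTail_le_komatsuBound {c : ℝ} (hc1 : 1 ≤ c) (hc2 : c < 2)
    (h0 : gaussianTail 0 ≤ komatsuBound c 0) {x : ℝ} (hx : 0 ≤ x) :
    gaussianTail x ≤ komatsuBound c x := by
  have hc0 : 0 < c := by linarith
  set D := fun y ↦ gaussianTail y - komatsuBound c y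
  have hD := hasDerivAt_gaussianTail_sub_komatsuBound hc0
  have hDcont : Continuous D := continuous_iff_continuousAt.2 fun y ↦ (hD y).continuousAt
  have hfac (y : ℝ) : 0 ≤ komatsuBound c y / √(y ^ 2 + c) :=
    div_nonneg (komatsuBound_pos hc0 y).le (sqrt_nonneg _)
  -- `D'` changes sign at `x₀`: `D` decreases on `[0, x₀]` and increases on `[x₀, ∞)`.
  set x₀ := √((c - 1) ^ 2 / (2 - c))
  have hx₀ : 0 ≤ x₀ := sqrt_nonneg _
  have hx₀sq : x₀ ^ 2 = (c - 1) ^ 2 / (2 - c) := sq_sqrt (by positivity)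
  suffices D x ≤ 0 from sub_nonpos.1 this
  rcases le_total x x₀ with hxx₀ | hx₀x
  · have hanti : AntitoneOn D (Icc 0 x₀) := by
      refine antitoneOn_of_hasDerivWithinAt_nonpos (convex_Icc 0 x₀) hDcont.continuousOn
        (fun y _ ↦ (hD y).hasDerivWithinAt) fun y hy ↦ ?_
      rw [interior_Icc] at hy
      have : y ^ 2 ≤ x₀ ^ 2 := pow_le_pow_left₀ hy.1.le hy.2.le 2
      rw [hx₀sq, le_div_iff₀ (by linarith)] at this
      exact mul_nonpos_of_nonneg_of_nonpos (hfac y)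
        (sub_nonpos.2 (mul_sqrt_sq_add_le hc1 (by linarith)))
    calc D x ≤ D 0 := hanti ⟨le_rfl, hx₀⟩ ⟨hx, hxx₀⟩ hx
      _ ≤ 0 := sub_nonpos.2 h0
  · have hmono : MonotoneOn D (Ici x₀) := by
      refine monotoneOn_of_hasDerivWithinAt_nonneg (convex_Ici x₀) hDcont.continuousOn
        (fun y _ ↦ (hD y).hasDerivWithinAt) fun y hy ↦ ?_
      rw [interior_Ici] at hy
      have : x₀ ^ 2 ≤ y ^ 2 := pow_le_pow_left₀ hx₀ hy.le 2
      rw [hx₀sq, div_le_iff₀ (by linarith)] at this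
      exact mul_nonneg (hfac y)
        (sub_nonneg.2 (le_mul_sqrt_sq_add hc0.le (hx₀.trans hy.le) (by linarith)))
    refine ge_of_tendsto (tendsto_gaussianTail_sub_komatsuBound_atTop c) ?_
    filter_upwards [eventually_ge_atTop x] with y hy
    exact hmono hx₀x (hx₀x.trans hy) hy

/-- Two-sided Komatsu-type bounds on the Gaussian tail: for `x > 0`,
`2e^{−x²}/(√π(x+√(x²+2))) ≤ erfc(x) ≤ 2e^{−x²}/(√π(x+√(x²+4/π)))`. -/
theorem stmt5 (x : ℝ) (hx : 0 < x) :
    2 * Real.exp (-(x^2)) / (Real.sqrt Real.pi * (x + Real.sqrt (x^2 + 2)))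
        ≤ erfc x ∧
    erfc x ≤
      2 * Real.exp (-(x^2)) /
        (Real.sqrt Real.pi * (x + Real.sqrt (x^2 + 4/Real.pi))) := by
  have h2π : 0 ≤ 2 / √π := by positivity
  have hπ1 : 1 ≤ 4 / π := (one_le_div pi_pos).2 (by linarith [pi_lt_four])
  have hπ2 : 4 / π < 2 := (div_lt_iff₀ pi_pos).2 (by linarith [pi_gt_three])
  have h0 : gaussianTail 0 ≤ komatsuBound (4 / π) 0 := by
    rw [gaussianTail_zero, komatsuBound_four_div_pi_zero]
  rw [erfc_eq_mul_gaussianTail, mul_div_mul_comm, mul_div_mul_comm]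
  exact ⟨mul_le_mul_of_nonneg_left (komatsuBound_le_gaussianTail le_rfl x) h2π,
    mul_le_mul_of_nonneg_left (gaussianTail_le_komatsuBound hπ1 hπ2 h0 hx.le) h2π⟩
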